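/- Suppose f: (Z_k)^n → Z_l satisfies Σ_{j=1}^n E_x[|f(x) - f(x ⊕ e_j)|'] ≤ B. For t ∈ Z_l, let A^{(t)} = {x : f(x) ∈ {t, ..., t + ⌊l/2⌋ - 1}} and let ∂'(A^{(t)}) be the edge-boundary of A^{(t)} in the torus graph on (Z_k)^n. Then (1/4) Σ_{t ∈ Z_l} |∂'(A^{(t)})| / k^n ≤ B. -/
import Mathlib

/-- Cyclic distance in `ZMod q`. -/
def cdist (q : ℕ) [NeZero q] (a b : ZMod q) : ℕ := min (a - b).val (q - (a - b).val)

/-- Adjacency in the torus graph `T_{k,n}` on `(Z_k)^n`: differ in exactly one coordinate,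
with cyclic distance `1` there. -/
def torusAdj (k n : ℕ) [NeZero k] (x y : Fin n → ZMod k) : Prop :=
  ∃ j, cdist k (x j) (y j) = 1 ∧ ∀ i, i ≠ j → x i = y i

/-- The size of the edge-boundary of `A` in the torus `T_{k,n}`: each boundary edge is
counted once, as the ordered pair (inside endpoint, outside endpoint). -/
noncomputable def torusBoundary (k n : ℕ) [NeZero k] (A : Set (Fin n → ZMod k)) : ℕ :=
  Set.ncard {p : (Fin n → ZMod k) × (Fin n → ZMod k) |
    p.1 ∈ A ∧ p.2 ∉ A ∧ torusAdj k n p.1 p.2}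

open Finset

lemma cdist_symm (l : ℕ) [NeZero l] (a b : ZMod l) : cdist l a b = cdist l b a := by
  unfold cdist
  rcases eq_or_ne a b with rfl | h2
  · simp
  · have h3 : b - a = -(a - b) := by ring
    have h4 : a - b ≠ 0 := sub_ne_zero.mpr h2
    have h5 : (a - b).val ≠ 0 := by simpa [ZMod.val_eq_zero] using h4
    have h6 := ZMod.val_lt (a - b)
    rw [h3, ZMod.neg_val, if_neg h4]
    omega

lemma count_le (l : ℕ) [NeZero l] (a b : ZMod l)
    [DecidablePred fun t : ZMod l => (a - t).val < l / 2 ∧ ¬ (b - t).val < l / 2] :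
    (univ.filter (fun t : ZMod l => (a - t).val < l / 2 ∧ ¬ (b - t).val < l / 2)).card
      ≤ cdist l a b := by
  have hl : 0 < l := Nat.pos_of_ne_zero (NeZero.ne l)
  rcases eq_or_ne a b with rfl | hab
  · have he : (univ.filter (fun t : ZMod l => (a - t).val < l / 2 ∧ ¬ (a - t).val < l / 2)) = ∅ := by
      apply Finset.filter_false_of_mem
      intro t _
      tauto
    rw [he]
    simp
  set c := (b - a).val with hc
  have hcl : c < l := ZMod.val_lt _
  have key : ∀ t ∈ univ.filter (fun t : ZMod l => (a - t).val < l / 2 ∧ ¬ (b - t).val < l / 2),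
      (b - t).val ∈ Finset.Ico (max (l / 2) c) (min (c + l / 2) l) := by
    intro t ht
    simp only [mem_filter, mem_univ, true_and, not_lt] at ht
    obtain ⟨h1, h2⟩ := ht
    have hbt : b - t = (b - a) + (a - t) := by ring
    have hval : (b - t).val = (c + (a - t).val) % l := by
      rw [hbt, ZMod.val_add]
    set s := (a - t).val with hs
    have hsl : s < l := ZMod.val_lt _
    simp only [mem_Ico, max_le_iff, lt_min_iff]
    rw [hval] at h2 ⊢
    rcases Nat.lt_or_ge (c + s) l with h | h
    · rw [Nat.mod_eq_of_lt h] at h2 ⊢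
      omega
    · have hh : (c + s) % l = c + s - l := by
        rw [Nat.mod_eq_sub_mod h, Nat.mod_eq_of_lt (by omega)]
      rw [hh] at h2
      omega
  have hinj : Set.InjOn (fun t : ZMod l => (b - t).val)
      ↑(univ.filter (fun t : ZMod l => (a - t).val < l / 2 ∧ ¬ (b - t).val < l / 2)) := by
    intro t1 _ t2 _ h
    have h' : b - t1 = b - t2 := ZMod.val_injective l h
    exact sub_right_injective h'
  have hcard := Finset.card_le_card_of_injOn _ key hinj
  rw [Nat.card_Ico] at hcard
  have hval_ab : (a - b).val = l - c := by
    have h3 : a - b = -(b - a) := by ring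
    have h4 : b - a ≠ 0 := sub_ne_zero.mpr (Ne.symm hab)
    rw [h3, ZMod.neg_val, if_neg h4]
  have hc0 : c ≠ 0 := fun h => (sub_ne_zero.mpr (Ne.symm hab)) (by rwa [← ZMod.val_eq_zero])
  unfold cdist
  rw [hval_ab]
  simp only [Nat.max_def, Nat.min_def] at hcard ⊢
  split_ifs at hcard ⊢ <;> omega

lemma tb_eq (k n : ℕ) [NeZero k] (A : Set (Fin n → ZMod k))
    [DecidablePred (fun p : (Fin n → ZMod k) × (Fin n → ZMod k) =>
        p.1 ∈ A ∧ p.2 ∉ A ∧ torusAdj k n p.1 p.2)] :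
    torusBoundary k n A =
      (univ.filter (fun p : (Fin n → ZMod k) × (Fin n → ZMod k) =>
        p.1 ∈ A ∧ p.2 ∉ A ∧ torusAdj k n p.1 p.2)).card := by
  rw [torusBoundary, ← Set.ncard_coe_finset]
  congr 1
  ext p
  simp

lemma my_sum_image_le {α β : Type*} [DecidableEq β] (s : Finset α) (φ : α → β) (w : β → ℕ) :
    ∑ b ∈ s.image φ, w b ≤ ∑ a ∈ s, w (φ a) := by
  conv_rhs => rw [Finset.sum_comp w φ]
  apply Finset.sum_le_sum
  intro b hb
  have h1 : 1 ≤ #{a ∈ s | φ a = b} := by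
    rw [Finset.mem_image] at hb
    obtain ⟨a, ha, rfl⟩ := hb
    exact Finset.card_pos.mpr ⟨a, Finset.mem_filter.mpr ⟨ha, rfl⟩⟩
  calc w b = 1 * w b := (one_mul _).symm
    _ ≤ #{a ∈ s | φ a = b} * w b := Nat.mul_le_mul_right _ h1
    _ = #{a ∈ s | φ a = b} • w b := rfl

lemma adj_form {k n : ℕ} [NeZero k] {x y : Fin n → ZMod k} (h : torusAdj k n x y) :
    ∃ j, y = Function.update x j (x j + 1) ∨ y = Function.update x j (x j - 1) := by
  obtain ⟨j, h1, h2⟩ := h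
  refine ⟨j, ?_⟩
  have hk : 0 < k := Nat.pos_of_ne_zero (NeZero.ne k)
  have hvlt : (x j - y j).val < k := ZMod.val_lt _
  unfold cdist at h1
  have hv : (x j - y j).val = 1 ∨ (x j - y j).val = k - 1 := by omega
  have hupd : ∀ v : ZMod k, y j = v → y = Function.update x j v := by
    rintro v rfl
    funext i
    rcases eq_or_ne i j with rfl | hij
    · simp
    · simp [Function.update, hij, h2 i hij]
  rcases hv with h | h
  · right
    apply hupd
    have e1 : x j - y j = 1 := by
      have := ZMod.natCast_zmod_val (x j - y j)
      rw [h] at this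
      simpa using this.symm
    have e2 : y j = x j - 1 := by rw [← e1]; ring
    rw [e2]
  · left
    apply hupd
    have e1 : x j - y j = -1 := by
      have := ZMod.natCast_zmod_val (x j - y j)
      rw [h] at this
      rw [← this, Nat.cast_sub hk, ZMod.natCast_self, Nat.cast_one, zero_sub]
    have e2 : y j = x j + 1 := by
      rw [sub_eq_iff_eq_add] at e1
      rw [e1]; ring
    rw [e2]

/-- The shift equivalence on `(Fin n → ZMod k)` in direction `j`. -/
def shiftEquiv (k n : ℕ) [NeZero k] (j : Fin n) :
    (Fin n → ZMod k) ≃ (Fin n → ZMod k) where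
  toFun x := Function.update x j (x j + 1)
  invFun x := Function.update x j (x j - 1)
  left_inv x := by
    funext i
    rcases eq_or_ne i j with rfl | hij
    · simp
    · simp [Function.update, hij]
  right_inv x := by
    funext i
    rcases eq_or_ne i j with rfl | hij
    · simp
    · simp [Function.update, hij]

/-- If `f : (Z_k)^n → Z_l` satisfies `Σ_j E_x[|f(x) - f(x ⊕ e_j)|'] ≤ B`,
then with `A^{(t)} = {x : f x ∈ {t, …, t + ⌊l/2⌋ - 1}}`,
`(1/4) Σ_{t ∈ Z_l} |∂'(A^{(t)})| / k^n ≤ B`. -/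
theorem stmt14 (k l n : ℕ) [NeZero k] [NeZero l] (B : ℝ)
    (f : (Fin n → ZMod k) → ZMod l)
    (hB : ∑ j : Fin n, (1 / (k : ℝ) ^ n) * ∑ x : Fin n → ZMod k,
        (cdist l (f x) (f (Function.update x j (x j + 1))) : ℝ) ≤ B) :
    (1 / 4) * ∑ t : ZMod l,
        (torusBoundary k n {x : Fin n → ZMod k | (f x - t).val < l / 2} : ℝ) / (k : ℝ) ^ n
      ≤ B := by
  classical
  have hkpos : (0 : ℝ) < (k : ℝ) ^ n := by
    have : (0 : ℝ) < (k : ℝ) := by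
      exact_mod_cast Nat.pos_of_ne_zero (NeZero.ne k)
    positivity
  -- Step 1: the key natural-number inequality
  have key : ∑ t : ZMod l, torusBoundary k n {x : Fin n → ZMod k | (f x - t).val < l / 2}
      ≤ 2 * ∑ j : Fin n, ∑ x : Fin n → ZMod k,
          cdist l (f x) (f (Function.update x j (x j + 1))) := by
    have e1 : ∀ t : ZMod l,
        torusBoundary k n {x : Fin n → ZMod k | (f x - t).val < l / 2}
        = ∑ p : (Fin n → ZMod k) × (Fin n → ZMod k),
            if (f p.1 - t).val < l / 2 ∧ ¬ (f p.2 - t).val < l / 2 ∧ torusAdj k n p.1 p.2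
            then 1 else 0 := by
      intro t
      rw [tb_eq, Finset.card_filter]
      apply Finset.sum_congr rfl
      intro p _
      congr 1
    calc ∑ t : ZMod l, torusBoundary k n {x : Fin n → ZMod k | (f x - t).val < l / 2}
        = ∑ t : ZMod l, ∑ p : (Fin n → ZMod k) × (Fin n → ZMod k),
            if (f p.1 - t).val < l / 2 ∧ ¬ (f p.2 - t).val < l / 2 ∧ torusAdj k n p.1 p.2
            then 1 else 0 := by
          exact Finset.sum_congr rfl fun t _ => e1 t
      _ = ∑ p : (Fin n → ZMod k) × (Fin n → ZMod k), ∑ t : ZMod l,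
            if (f p.1 - t).val < l / 2 ∧ ¬ (f p.2 - t).val < l / 2 ∧ torusAdj k n p.1 p.2
            then 1 else 0 := Finset.sum_comm
      _ ≤ ∑ p : (Fin n → ZMod k) × (Fin n → ZMod k),
            if torusAdj k n p.1 p.2 then cdist l (f p.1) (f p.2) else 0 := by
          apply Finset.sum_le_sum
          intro p _
          by_cases hadj : torusAdj k n p.1 p.2
          · simp only [hadj, and_true, if_true]
            rw [← Finset.card_filter]
            exact count_le l (f p.1) (f p.2)
          · simp [hadj]
      _ = ∑ p ∈ univ.filter (fun p : (Fin n → ZMod k) × (Fin n → ZMod k) =>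
            torusAdj k n p.1 p.2), cdist l (f p.1) (f p.2) := (Finset.sum_filter _ _).symm
      _ ≤ ∑ q : ((Fin n → ZMod k) × Fin n) × Bool,
            cdist l (f q.1.1)
              (f (Function.update q.1.1 q.1.2 (q.1.1 q.1.2 + if q.2 then 1 else -1))) := by
          set φ : ((Fin n → ZMod k) × Fin n) × Bool → (Fin n → ZMod k) × (Fin n → ZMod k) :=
            fun q => (q.1.1, Function.update q.1.1 q.1.2 (q.1.1 q.1.2 + if q.2 then 1 else -1))
            with hφ
          have hsub : univ.filter (fun p : (Fin n → ZMod k) × (Fin n → ZMod k) =>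
              torusAdj k n p.1 p.2) ⊆ univ.image φ := by
            intro p hp
            rw [Finset.mem_filter] at hp
            obtain ⟨j, hj⟩ := adj_form hp.2
            rw [Finset.mem_image]
            rcases hj with hj | hj
            · exact ⟨((p.1, j), true), Finset.mem_univ _, by
                simp only [hφ, if_true]
                exact Prod.ext rfl hj.symm⟩
            · refine ⟨((p.1, j), false), Finset.mem_univ _, ?_⟩
              have hv : Function.update p.1 j (p.1 j + if (false : Bool) then 1 else -1)
                  = Function.update p.1 j (p.1 j - 1) := by
                norm_num [sub_eq_add_neg]
              refine Prod.ext rfl ?_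
              show Function.update p.1 j (p.1 j + if (false : Bool) then 1 else -1) = p.2
              rw [hv]
              exact hj.symm
          calc ∑ p ∈ univ.filter (fun p : (Fin n → ZMod k) × (Fin n → ZMod k) =>
                torusAdj k n p.1 p.2), cdist l (f p.1) (f p.2)
              ≤ ∑ p ∈ univ.image φ, cdist l (f p.1) (f p.2) :=
                Finset.sum_le_sum_of_subset hsub
            _ ≤ ∑ q : ((Fin n → ZMod k) × Fin n) × Bool,
                  cdist l (f (φ q).1) (f (φ q).2) := my_sum_image_le _ _ _
            _ = _ := rfl
      _ = ∑ a : (Fin n → ZMod k) × Fin n,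
            (cdist l (f a.1) (f (Function.update a.1 a.2 (a.1 a.2 + 1)))
              + cdist l (f a.1) (f (Function.update a.1 a.2 (a.1 a.2 + -1)))) := by
          rw [Fintype.sum_prod_type]
          apply Finset.sum_congr rfl
          intro a _
          rw [Fintype.sum_bool]
          simp
      _ = (∑ a : (Fin n → ZMod k) × Fin n,
            cdist l (f a.1) (f (Function.update a.1 a.2 (a.1 a.2 + 1))))
          + ∑ a : (Fin n → ZMod k) × Fin n,
            cdist l (f a.1) (f (Function.update a.1 a.2 (a.1 a.2 + -1))) :=
          Finset.sum_add_distrib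
      _ = 2 * ∑ j : Fin n, ∑ x : Fin n → ZMod k,
            cdist l (f x) (f (Function.update x j (x j + 1))) := by
          have hswap : ∀ j : Fin n,
              (∑ x : Fin n → ZMod k,
                cdist l (f x) (f (Function.update x j (x j + -1))))
              = ∑ x : Fin n → ZMod k,
                cdist l (f x) (f (Function.update x j (x j + 1))) := by
            intro j
            have hcomp := Equiv.sum_comp (shiftEquiv k n j)
              (fun x => cdist l (f x) (f (Function.update x j (x j + -1))))
            rw [← hcomp]
            apply Finset.sum_congr rfl
            intro x _
            have h1 : (shiftEquiv k n j x) = Function.update x j (x j + 1) := rfl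
            have h2 : Function.update (shiftEquiv k n j x) j
                ((shiftEquiv k n j x) j + -1) = x := by
              funext i
              rcases eq_or_ne i j with rfl | hij
              · simp [shiftEquiv]
              · simp [shiftEquiv, Function.update, hij]
            show cdist l (f (shiftEquiv k n j x))
                (f (Function.update (shiftEquiv k n j x) j
                  ((shiftEquiv k n j x) j + -1))) = _
            rw [h2, h1, cdist_symm]
          rw [Fintype.sum_prod_type_right, Fintype.sum_prod_type_right]
          rw [Finset.sum_congr rfl (fun j _ => hswap j)]
          ring
  -- Step 2: real arithmetic
  set SN : ℕ := ∑ j : Fin n, ∑ x : Fin n → ZMod k,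
      cdist l (f x) (f (Function.update x j (x j + 1))) with hSN
  have hcast : ((SN : ℕ) : ℝ) = ∑ j : Fin n, ∑ x : Fin n → ZMod k,
      (cdist l (f x) (f (Function.update x j (x j + 1))) : ℝ) := by
    rw [hSN]
    push_cast
    rfl
  have hB' : (SN : ℝ) / (k : ℝ) ^ n ≤ B := by
    calc (SN : ℝ) / (k : ℝ) ^ n
        = ∑ j : Fin n, (1 / (k : ℝ) ^ n) * ∑ x : Fin n → ZMod k,
            (cdist l (f x) (f (Function.update x j (x j + 1))) : ℝ) := by
          rw [← Finset.mul_sum, ← hcast, one_div, inv_mul_eq_div]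
      _ ≤ B := hB
  have hT : (∑ t : ZMod l,
      (torusBoundary k n {x : Fin n → ZMod k | (f x - t).val < l / 2} : ℝ))
      ≤ 2 * (SN : ℝ) := by
    have := key
    calc (∑ t : ZMod l,
        (torusBoundary k n {x : Fin n → ZMod k | (f x - t).val < l / 2} : ℝ))
        = ((∑ t : ZMod l,
            torusBoundary k n {x : Fin n → ZMod k | (f x - t).val < l / 2} : ℕ) : ℝ) := by
          push_cast
          rfl
      _ ≤ ((2 * SN : ℕ) : ℝ) := by exact_mod_cast this
      _ = 2 * (SN : ℝ) := by push_cast; ring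
  rw [← Finset.sum_div]
  have hfrac : (∑ t : ZMod l,
      (torusBoundary k n {x : Fin n → ZMod k | (f x - t).val < l / 2} : ℝ)) / (k : ℝ) ^ n
      ≤ (2 * (SN : ℝ)) / (k : ℝ) ^ n := by gcongr
  have he : (2 * (SN : ℝ)) / (k : ℝ) ^ n = 2 * ((SN : ℝ) / (k : ℝ) ^ n) := by ring
  have hnn : (0 : ℝ) ≤ (SN : ℝ) / (k : ℝ) ^ n := by positivity
  linarith
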